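/- Let Ω be a countable type, let P_h and P be probability mass functions on Ω, and let S ⊆ Ω with p_h := P_h(S) > 0 and p := P(S) > 0. Assume that P(τ) > 0 for every τ ∈ S with P_h(τ) > 0, and that the function τ ↦ P_h(τ)·log(P_h(τ)/P(τ)) is absolutely summable over S. Define the average hint reliance ρ_c := ∑_{τ∈S} (P_h(τ)/p_h)·log(P_h(τ)/P(τ)). Then p ≥ p_h · exp(−ρ_c). -/

import Mathlib

open scoped BigOperators

/-- **Transfer bound.**
For pmfs `Ph` and `P` on a countable type `Ω` and a set `S` with hinted success
probability `ph = Ph(S) > 0` and no-hint success probability `p = P(S) > 0`,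
assuming `P(τ) > 0` whenever `τ ∈ S` and `Ph(τ) > 0`, and absolute summability of
`τ ↦ Ph(τ)·log(Ph(τ)/P(τ))` over `S`, the average hint reliance
`ρ_c = ∑_{τ∈S} (Ph(τ)/ph)·log(Ph(τ)/P(τ))` yields `p ≥ ph · exp(−ρ_c)`. -/
theorem transfer_bound
    {Ω : Type*} [Countable Ω]
    (Ph P : Ω → ℝ)
    (hPh_nonneg : ∀ τ, 0 ≤ Ph τ) (hP_nonneg : ∀ τ, 0 ≤ P τ)
    (hPh_sum : ∑' τ, Ph τ = 1) (hP_sum : ∑' τ, P τ = 1)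
    (S : Set Ω)
    (ph p : ℝ)
    (hph_def : ph = ∑' τ : S, Ph τ) (hp_def : p = ∑' τ : S, P τ)
    (hph_pos : 0 < ph) (hp_pos : 0 < p)
    (hpos : ∀ τ ∈ S, 0 < Ph τ → 0 < P τ)
    (hsum : Summable fun τ : S => |Ph τ * Real.log (Ph τ / P τ)|)
    (ρc : ℝ)
    (hρc_def : ρc = ∑' τ : S, (Ph τ / ph) * Real.log (Ph τ / P τ)) :
    p ≥ ph * Real.exp (-ρc) := by
  -- summability facts
  have hSummPh : Summable Ph := by
    by_contra h
    rw [tsum_eq_zero_of_not_summable h] at hPh_sum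
    norm_num at hPh_sum
  have hSummP : Summable P := by
    by_contra h
    rw [tsum_eq_zero_of_not_summable h] at hP_sum
    norm_num at hP_sum
  have hSummPhS : Summable fun τ : S => Ph τ := hSummPh.subtype S
  have hSummPS : Summable fun τ : S => P τ := hSummP.subtype S
  have hsumg : Summable fun τ : S => (Ph τ / ph) * Real.log (Ph τ / P τ) := by
    have := (hsum.of_abs).div_const ph
    convert this using 2 with τ
    · rfl
    · ring
  -- the pointwise bound
  have key : ∀ τ : S, Ph τ / ph - P τ / p + (Ph τ / ph) * Real.log (ph / p)
      ≤ (Ph τ / ph) * Real.log (Ph τ / P τ) := by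
    intro τ
    rcases eq_or_lt_of_le (hPh_nonneg τ) with h0 | hτpos
    · rw [← h0]
      have : 0 ≤ P τ / p := div_nonneg (hP_nonneg τ) hp_pos.le
      simp
      linarith
    · have hPτ : 0 < P τ := hpos τ τ.2 hτpos
      have hx : (0:ℝ) < (P τ * ph) / (Ph τ * p) :=
        div_pos (mul_pos hPτ hph_pos) (mul_pos hτpos hp_pos)
      have hlog := Real.log_le_sub_one_of_pos hx
      have hinv : Real.log ((P τ * ph) / (Ph τ * p)) =
          Real.log (P τ) + Real.log ph - Real.log (Ph τ) - Real.log p := by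
        rw [Real.log_div (by positivity) (by positivity),
          Real.log_mul hPτ.ne' hph_pos.ne', Real.log_mul hτpos.ne' hp_pos.ne']
        ring
      rw [hinv] at hlog
      have e1 : Real.log (Ph τ / P τ) = Real.log (Ph τ) - Real.log (P τ) :=
        Real.log_div hτpos.ne' hPτ.ne'
      have e2 : Real.log (ph / p) = Real.log ph - Real.log p :=
        Real.log_div hph_pos.ne' hp_pos.ne'
      have hw : 0 < Ph τ / ph := div_pos hτpos hph_pos
      -- from hlog: log P + log ph - log Ph - log p ≤ (P·ph)/(Ph·p) - 1
      -- multiply by Ph/ph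
      have hmul := mul_le_mul_of_nonneg_left hlog hw.le
      have hid : (Ph τ / ph) * ((P τ * ph) / (Ph τ * p) - 1)
          = P τ / p - Ph τ / ph := by
        field_simp
      rw [hid] at hmul
      rw [e1, e2]
      nlinarith [hmul]
  -- sum the RHS of key
  have hsumf : Summable fun τ : S => Ph τ / ph - P τ / p + (Ph τ / ph) * Real.log (ph / p) :=
    ((hSummPhS.div_const ph).sub (hSummPS.div_const p)).add
      ((hSummPhS.div_const ph).mul_right _)
  have hsum1 : ∑' τ : S, Ph τ / ph = 1 := by
    rw [tsum_div_const, ← hph_def, div_self hph_pos.ne']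
  have hsum2 : ∑' τ : S, P τ / p = 1 := by
    rw [tsum_div_const, ← hp_def, div_self hp_pos.ne']
  have hρc_ge : Real.log (ph / p) ≤ ρc := by
    have hle := Summable.tsum_le_tsum key hsumf hsumg
    rw [hρc_def]
    calc Real.log (ph / p)
        = ∑' τ : S, (Ph τ / ph - P τ / p + (Ph τ / ph) * Real.log (ph / p)) := by
          rw [Summable.tsum_add ((hSummPhS.div_const ph).sub (hSummPS.div_const p))
            ((hSummPhS.div_const ph).mul_right _),
            Summable.tsum_sub (hSummPhS.div_const ph) (hSummPS.div_const p),
            tsum_mul_right, hsum1, hsum2]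
          ring
      _ ≤ _ := hle
  -- conclude
  have hexp : Real.exp (-ρc) ≤ p / ph := by
    have : -ρc ≤ Real.log (p / ph) := by
      rw [Real.log_div hp_pos.ne' hph_pos.ne']
      rw [Real.log_div hph_pos.ne' hp_pos.ne'] at hρc_ge
      linarith
    calc Real.exp (-ρc) ≤ Real.exp (Real.log (p / ph)) := Real.exp_le_exp.mpr this
      _ = p / ph := Real.exp_log (div_pos hp_pos hph_pos)
  have := mul_le_mul_of_nonneg_left hexp hph_pos.le
  rw [mul_div_cancel₀ p hph_pos.ne'] at this
  linarith
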